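/- On the Heisenberg algebra H_n over a field of characteristic 0, the operator ∂̄_h (derivative with respect to h in the basis h^m y^I x^J) satisfies ∂̄_h = ∂_h + Σ_l ∂_{x_l}∂_{y_l}, and [∂̄_h, λ_{x_l}] = ∂_{y_l}, [∂̄_h, λ_{y_l}] = 0, [∂̄_h, λ_h] = id. -/

import Mathlib

/-- A realization of the `n`-th Heisenberg algebra over `k`: a `k`-algebra `H` with
generators `h, x_1, …, x_n, y_1, …, y_n` satisfying `[x_i, y_j] = δ_{ij} h` and all other
commutators of generators zero, together with its PBW basis `{h^m x^I y^J}`. -/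
structure HeisenbergPBW (k : Type*) [Field k] (n : ℕ) (H : Type*) [Ring H]
    [Algebra k H] where
  h : H
  x : Fin n → H
  y : Fin n → H
  basis : Module.Basis (ℕ × (Fin n → ℕ) × (Fin n → ℕ)) k H
  basis_eq : ∀ (m : ℕ) (I J : Fin n → ℕ), basis (m, I, J) =
    h ^ m * (List.ofFn fun i => x i ^ I i).prod * (List.ofFn fun i => y i ^ J i).prod
  comm_xy : ∀ i j, x i * y j - y j * x i = if i = j then h else 0
  comm_xx : ∀ i j, x i * x j = x j * x i
  comm_yy : ∀ i j, y i * y j = y j * y i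
  h_central : ∀ a : H, h * a = a * h

namespace HeisenbergPBW

variable {k : Type*} [Field k] {n : ℕ} {H : Type*} [Ring H] [Algebra k H]

/-- The formal partial derivative `∂_{x_l}` on the PBW basis. -/
noncomputable def pdx (B : HeisenbergPBW k n H) (l : Fin n) : H →ₗ[k] H :=
  B.basis.constr k fun p =>
    (p.2.1 l) • B.basis (p.1, Function.update p.2.1 l (p.2.1 l - 1), p.2.2)

/-- The formal partial derivative `∂_{y_l}` on the PBW basis. -/
noncomputable def pdy (B : HeisenbergPBW k n H) (l : Fin n) : H →ₗ[k] H :=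
  B.basis.constr k fun p =>
    (p.2.2 l) • B.basis (p.1, p.2.1, Function.update p.2.2 l (p.2.2 l - 1))

/-- The formal partial derivative `∂_h` on the PBW basis `h^m x^I y^J`. -/
noncomputable def pdh (B : HeisenbergPBW k n H) : H →ₗ[k] H :=
  B.basis.constr k fun p => p.1 • B.basis (p.1 - 1, p.2.1, p.2.2)

end HeisenbergPBW

/-- `∂̄_h`, the derivative with respect to `h` in an alternative PBW basis
`h^m y^I x^J` of the Heisenberg algebra. -/
noncomputable def HeisenbergPBW.pdhBar {k : Type*} [Field k] {n : ℕ} {H : Type*} [Ring H]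
    [Algebra k H] (B : HeisenbergPBW k n H)
    (basis' : Module.Basis (ℕ × (Fin n → ℕ) × (Fin n → ℕ)) k H) : H →ₗ[k] H :=
  basis'.constr k fun p => p.1 • basis' (p.1 - 1, p.2.1, p.2.2)

/-!
An operator `φ` on `H` is determined by `φ 1` and its brackets `[φ, λ_g]` with the
generators `g = h, x_l, y_l`: the `a` with `[φ₁ - φ₂, λ_a] = 0` form a subalgebra, which
contains the whole PBW basis once it contains the generators. The brackets of `∂_h`,
`∂_{x_l}`, `∂_{y_l}` with the generators are read off from the action of `λ_h`, `λ_{x_j}`,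
`λ_{y_j}` on `h^m x^I y^J`. Up to the signs `(-1)^{|J|}`, the basis `h^m y^I x^J` is the PBW
basis of `H` for the generators `h, y_l, -x_l`, which satisfy the same relations; in it `∂̄_h`
is the derivative in `h`, so the general brackets apply to `∂̄_h` as well. Both sides of
`∂̄_h = ∂_h + Σ ∂_{x_l} ∂_{y_l}` then vanish at `1` and have the same brackets with the
generators.
-/

open Function

namespace LinearMap

variable {R A : Type*} [CommSemiring R] [Ring A] [Algebra R A]

def bracketMulLeft (φ : Module.End R A) (a : A) : Module.End R A :=
  φ ∘ₗ mulLeft R a - mulLeft R a ∘ₗ φ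

@[simp]
theorem bracketMulLeft_apply (φ : Module.End R A) (a c : A) :
    bracketMulLeft φ a c = φ (a * c) - a * φ c :=
  rfl

theorem bracketMulLeft_add (φ ψ : Module.End R A) (a : A) :
    bracketMulLeft (φ + ψ) a = bracketMulLeft φ a + bracketMulLeft ψ a := by
  ext c
  simp only [bracketMulLeft_apply, add_apply, mul_add]
  abel

theorem bracketMulLeft_sum {ι : Type*} (s : Finset ι) (φ : ι → Module.End R A) (a : A) :
    bracketMulLeft (∑ i ∈ s, φ i) a = ∑ i ∈ s, bracketMulLeft (φ i) a := by
  ext c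
  simp only [bracketMulLeft_apply, sum_apply, Finset.mul_sum, Finset.sum_sub_distrib]

theorem bracketMulLeft_comp (φ ψ : Module.End R A) (a : A) :
    bracketMulLeft (φ ∘ₗ ψ) a =
      φ ∘ₗ bracketMulLeft ψ a + bracketMulLeft φ a ∘ₗ ψ := by
  ext c
  simp only [bracketMulLeft_apply, comp_apply, add_apply, map_sub]
  abel

theorem bracketMulLeft_neg_right (φ : Module.End R A) (a : A) :
    bracketMulLeft φ (-a) = -bracketMulLeft φ a := by
  ext c
  simp only [bracketMulLeft_apply, neg_apply, neg_mul, map_neg, neg_sub, sub_neg_eq_add]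
  abel

end LinearMap

theorem List.prod_ofFn_update {M : Type*} [Monoid M] {n : ℕ} (f : Fin n → M) (l : Fin n)
    (a : M) :
    (ofFn (update f l a)).prod = ((ofFn f).take l).prod * a * ((ofFn f).drop (l + 1)).prod := by
  have hset : ofFn (update f l a) = (ofFn f).set l a :=
    ext_getElem (by simp) fun i _ _ => by
      simp [getElem_set, update_apply, Fin.ext_iff, eq_comm]
  simp [hset, prod_set]

theorem List.commute_prod_take_ofFn {M : Type*} [Monoid M] {n : ℕ} {f : Fin n → M} {l : Fin n}
    {c : M} (hc : ∀ i, i ≠ l → Commute c (f i)) : Commute c ((ofFn f).take l).prod :=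
  Commute.list_prod_right _ _ fun b hb => by
    obtain ⟨i, hi, rfl⟩ := mem_take_iff_getElem.mp hb
    rw [List.getElem_ofFn]
    exact hc _ (by simp [Fin.ext_iff]; omega)

theorem List.commute_prod_drop_ofFn {M : Type*} [Monoid M] {n : ℕ} {f : Fin n → M} {l : Fin n}
    {c : M} (hc : ∀ i, i ≠ l → Commute c (f i)) : Commute c ((ofFn f).drop (l + 1)).prod :=
  Commute.list_prod_right _ _ fun b hb => by
    obtain ⟨i, hi, rfl⟩ := mem_iff_getElem.mp hb
    rw [getElem_drop, List.getElem_ofFn]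
    exact hc _ (by simp [Fin.ext_iff]; omega)

theorem List.prod_ofFn_eq_take_mul_drop {M : Type*} [Monoid M] {n : ℕ} (f : Fin n → M)
    (l : Fin n) : (ofFn f).prod = ((ofFn f).take l).prod * f l * ((ofFn f).drop (l + 1)).prod := by
  simpa using prod_ofFn_update f l (f l)

theorem List.ofFn_pow_update {M : Type*} [Monoid M] {n : ℕ} (g : Fin n → M) (I : Fin n → ℕ)
    (j : Fin n) (v : ℕ) :
    ofFn (fun i => g i ^ update I j v i) = ofFn (update (fun i => g i ^ I i) j (g j ^ v)) :=
  congrArg ofFn (funext (apply_update (fun i e => g i ^ e) I j v))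

theorem List.prod_ofFn_neg_pow {R : Type*} [Ring R] {n : ℕ} (g : Fin n → R)
    (J : Fin n → ℕ) :
    (ofFn fun i => (-g i) ^ J i).prod =
      (-1) ^ (∑ i, J i) * (ofFn fun i => g i ^ J i).prod := by
  induction n with
  | zero => simp
  | succ n ih =>
    rw [ofFn_succ, ofFn_succ, prod_cons, prod_cons, ih, Fin.sum_univ_succ, neg_pow, pow_add,
      mul_assoc, ← mul_assoc (g 0 ^ J 0), ← ((Commute.neg_one_left _).pow_left _).eq, mul_assoc,
      mul_assoc]

theorem mul_prod_ofFn_pow_of_commute {M : Type*} [Monoid M] {n : ℕ} {g : Fin n → M}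
    (hg : ∀ i j, Commute (g i) (g j)) (I : Fin n → ℕ) (j : Fin n) :
    g j * (List.ofFn fun i => g i ^ I i).prod =
      (List.ofFn fun i => g i ^ update I j (I j + 1) i).prod := by
  have hT := List.commute_prod_take_ofFn (f := fun i => g i ^ I i) (l := j)
    fun i _ => (hg j i).pow_right _
  rw [List.ofFn_pow_update, List.prod_ofFn_update, List.prod_ofFn_eq_take_mul_drop _ j,
    ← mul_assoc, ← mul_assoc, hT.eq, mul_assoc _ (g j), ← pow_succ']

theorem mul_pow_eq_pow_mul_add_nsmul {R : Type*} [Ring R] {a b z : R} (hab : b * a = a * b + z)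
    (hz : Commute z a) (n : ℕ) : b * a ^ n = a ^ n * b + n • (z * a ^ (n - 1)) := by
  induction n with
  | zero => simp
  | succ n ih =>
    have hpow : n • (z * a ^ (n - 1)) * a = n • (z * a ^ n) := by
      rcases n with _ | n <;> simp [mul_assoc, pow_succ]
    rw [pow_succ, ← mul_assoc, ih, add_mul, hpow, mul_assoc, hab, mul_add, ← mul_assoc,
      ← pow_succ, ← (hz.pow_right n).eq, Nat.add_sub_cancel, succ_nsmul']
    abel

theorem nsmul_sub_one_add_one {M : Type*} [AddMonoid M] (f : ℕ → M) (c : ℕ) :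
    c • f (c - 1 + 1) = c • f c := by
  rcases c with _ | c <;> simp

namespace HeisenbergPBW

open LinearMap (bracketMulLeft bracketMulLeft_apply)

variable {k : Type*} [Field k] {n : ℕ} {H : Type*} [Ring H] [Algebra k H]
  (B : HeisenbergPBW k n H)

theorem commute_h (a : H) : Commute B.h a := B.h_central a

theorem commute_y_x {i j : Fin n} (hij : i ≠ j) : Commute (B.y i) (B.x j) := by
  have := B.comm_xy j i
  rw [if_neg hij.symm, sub_eq_zero] at this
  exact this.symm

theorem y_mul_x (i : Fin n) : B.y i * B.x i = B.x i * B.y i - B.h := by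
  have := B.comm_xy i i
  rw [if_pos rfl] at this
  rw [← this, sub_sub_cancel]

theorem y_mul_prod_x (I : Fin n → ℕ) (j : Fin n) :
    B.y j * (List.ofFn fun i => B.x i ^ I i).prod =
      (List.ofFn fun i => B.x i ^ I i).prod * B.y j -
        I j • (B.h * (List.ofFn fun i => B.x i ^ update I j (I j - 1) i).prod) := by
  set F := fun i => B.x i ^ I i
  set T := ((List.ofFn F).take j).prod
  set D := ((List.ofFn F).drop (j + 1)).prod
  have hT : Commute (B.y j) T :=
    List.commute_prod_take_ofFn fun i hi => (B.commute_y_x hi.symm).pow_right _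
  have hD : Commute (B.y j) D :=
    List.commute_prod_drop_ofFn fun i hi => (B.commute_y_x hi.symm).pow_right _
  have hyx := mul_pow_eq_pow_mul_add_nsmul ((B.y_mul_x j).trans (sub_eq_add_neg _ _))
    ((B.commute_h _).neg_left) (I j)
  have key : B.y j * (T * B.x j ^ I j * D) =
      T * B.x j ^ I j * D * B.y j - I j • (B.h * (T * B.x j ^ (I j - 1) * D)) :=
    calc _ = T * (B.y j * B.x j ^ I j) * D := by
          rw [← mul_assoc, ← mul_assoc, hT.eq, mul_assoc T]
      _ = T * B.x j ^ I j * (B.y j * D) - I j • (T * B.h * B.x j ^ (I j - 1) * D) := by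
          rw [hyx, mul_add, add_mul, mul_smul_comm, smul_mul_assoc, neg_mul, mul_neg, neg_mul,
            smul_neg, ← sub_eq_add_neg]
          simp only [mul_assoc]
      _ = _ := by
          rw [hD.eq, ← (B.commute_h T).eq]
          simp only [mul_assoc]
  rw [List.ofFn_pow_update, List.prod_ofFn_update, List.prod_ofFn_eq_take_mul_drop F j]
  exact key

theorem h_mul_basis (m : ℕ) (I J : Fin n → ℕ) :
    B.h * B.basis (m, I, J) = B.basis (m + 1, I, J) := by
  rw [B.basis_eq, B.basis_eq, pow_succ', mul_assoc, mul_assoc, mul_assoc]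

theorem x_mul_basis (j : Fin n) (m : ℕ) (I J : Fin n → ℕ) :
    B.x j * B.basis (m, I, J) = B.basis (m, update I j (I j + 1), J) := by
  rw [B.basis_eq, B.basis_eq, ← mul_prod_ofFn_pow_of_commute B.comm_xx]
  simp only [← mul_assoc, ← ((B.commute_h (B.x j)).pow_left m).eq]

theorem y_mul_basis (j : Fin n) (m : ℕ) (I J : Fin n → ℕ) :
    B.y j * B.basis (m, I, J) =
      B.basis (m, I, update J j (J j + 1)) - I j • B.basis (m + 1, update I j (I j - 1), J) := by
  rw [B.basis_eq, B.basis_eq, B.basis_eq, ← mul_prod_ofFn_pow_of_commute B.comm_yy, ← mul_assoc,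
    ← mul_assoc, ← ((B.commute_h (B.y j)).pow_left m).eq, mul_assoc _ (B.y j), y_mul_prod_x]
  simp only [sub_mul, mul_sub, mul_assoc, smul_mul_assoc, mul_smul_comm, pow_succ]

theorem pdh_basis (m : ℕ) (I J : Fin n → ℕ) :
    B.pdh (B.basis (m, I, J)) = m • B.basis (m - 1, I, J) :=
  B.basis.constr_basis ..

theorem pdx_basis (l : Fin n) (m : ℕ) (I J : Fin n → ℕ) :
    B.pdx l (B.basis (m, I, J)) = I l • B.basis (m, update I l (I l - 1), J) :=
  B.basis.constr_basis ..

theorem pdy_basis (l : Fin n) (m : ℕ) (I J : Fin n → ℕ) :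
    B.pdy l (B.basis (m, I, J)) = J l • B.basis (m, I, update J l (J l - 1)) :=
  B.basis.constr_basis ..

theorem basis_zero : B.basis (0, 0, 0) = 1 := by
  simp [B.basis_eq]

theorem pdh_one : B.pdh 1 = 0 := by
  rw [← B.basis_zero, pdh_basis, zero_smul]

theorem pdx_one (l : Fin n) : B.pdx l 1 = 0 := by
  rw [← B.basis_zero, pdx_basis, Pi.zero_apply, zero_smul]

theorem pdy_one (l : Fin n) : B.pdy l 1 = 0 := by
  rw [← B.basis_zero, pdy_basis, Pi.zero_apply, zero_smul]

theorem bracketMulLeft_pdh_h : bracketMulLeft B.pdh B.h = LinearMap.id := by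
  refine B.basis.ext fun ⟨m, I, J⟩ => ?_
  simp only [bracketMulLeft_apply, LinearMap.id_apply, h_mul_basis, pdh_basis,
    mul_smul_comm, Nat.add_sub_cancel]
  rw [nsmul_sub_one_add_one (fun c => B.basis (c, I, J)), succ_nsmul, add_sub_cancel_left]

theorem bracketMulLeft_pdh_x (j : Fin n) : bracketMulLeft B.pdh (B.x j) = 0 := by
  refine B.basis.ext fun ⟨m, I, J⟩ => ?_
  simp only [bracketMulLeft_apply, LinearMap.zero_apply, x_mul_basis, pdh_basis, mul_smul_comm,
    sub_self]

theorem bracketMulLeft_pdh_y (j : Fin n) : bracketMulLeft B.pdh (B.y j) = -B.pdx j := by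
  refine B.basis.ext fun ⟨m, I, J⟩ => ?_
  simp only [bracketMulLeft_apply, LinearMap.neg_apply, y_mul_basis, pdh_basis, pdx_basis, map_sub,
    map_nsmul, mul_smul_comm]
  rcases m with _ | m
  · simp
  · simp only [Nat.add_sub_cancel]
    module

theorem bracketMulLeft_pdx_h (l : Fin n) : bracketMulLeft (B.pdx l) B.h = 0 := by
  refine B.basis.ext fun ⟨m, I, J⟩ => ?_
  simp only [bracketMulLeft_apply, LinearMap.zero_apply, h_mul_basis, pdx_basis, mul_smul_comm,
    sub_self]

theorem bracketMulLeft_pdx_x (l j : Fin n) :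
    bracketMulLeft (B.pdx l) (B.x j) = if l = j then LinearMap.id else 0 := by
  refine B.basis.ext fun ⟨m, I, J⟩ => ?_
  simp only [bracketMulLeft_apply, x_mul_basis, pdx_basis, mul_smul_comm]
  split_ifs with hlj
  · subst hlj
    simp only [update_self, update_idem, Nat.add_sub_cancel, update_eq_self]
    rw [nsmul_sub_one_add_one (fun v => B.basis (m, update I l v, J)), update_eq_self, succ_nsmul,
      add_sub_cancel_left, LinearMap.id_apply]
  · rw [update_of_ne hlj, update_of_ne (Ne.symm hlj), update_comm hlj, sub_self,
      LinearMap.zero_apply]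

theorem bracketMulLeft_pdx_y (l j : Fin n) : bracketMulLeft (B.pdx l) (B.y j) = 0 := by
  refine B.basis.ext fun ⟨m, I, J⟩ => ?_
  simp only [bracketMulLeft_apply, LinearMap.zero_apply, y_mul_basis, pdx_basis, map_sub, map_nsmul,
    mul_smul_comm]
  by_cases hlj : l = j
  · subst hlj
    simp only [update_self, update_idem]
    module
  · simp only [update_of_ne hlj, update_of_ne (Ne.symm hlj), update_comm hlj]
    module

theorem bracketMulLeft_pdy_h (l : Fin n) : bracketMulLeft (B.pdy l) B.h = 0 := by
  refine B.basis.ext fun ⟨m, I, J⟩ => ?_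
  simp only [bracketMulLeft_apply, LinearMap.zero_apply, h_mul_basis, pdy_basis, mul_smul_comm,
    sub_self]

theorem bracketMulLeft_pdy_x (l j : Fin n) : bracketMulLeft (B.pdy l) (B.x j) = 0 := by
  refine B.basis.ext fun ⟨m, I, J⟩ => ?_
  simp only [bracketMulLeft_apply, LinearMap.zero_apply, x_mul_basis, pdy_basis, mul_smul_comm,
    sub_self]

theorem bracketMulLeft_pdy_y (l j : Fin n) :
    bracketMulLeft (B.pdy l) (B.y j) = if l = j then LinearMap.id else 0 := by
  refine B.basis.ext fun ⟨m, I, J⟩ => ?_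
  simp only [bracketMulLeft_apply, y_mul_basis, pdy_basis, map_sub, map_nsmul,
    mul_smul_comm]
  split_ifs with hlj
  · subst hlj
    simp only [update_self, update_idem, Nat.add_sub_cancel, update_eq_self, smul_sub]
    rw [nsmul_sub_one_add_one (fun v => B.basis (m, I, update J l v)), update_eq_self,
      LinearMap.id_apply]
    module
  · rw [update_of_ne hlj, update_of_ne (Ne.symm hlj), update_comm hlj, LinearMap.zero_apply]
    module

theorem ext_of_bracketMulLeft_eq {D₁ D₂ : Module.End k H} (h1 : D₁ 1 = D₂ 1)
    (hh : bracketMulLeft D₁ B.h = bracketMulLeft D₂ B.h)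
    (hx : ∀ j, bracketMulLeft D₁ (B.x j) = bracketMulLeft D₂ (B.x j))
    (hy : ∀ j, bracketMulLeft D₁ (B.y j) = bracketMulLeft D₂ (B.y j)) : D₁ = D₂ := by
  let S := (Subalgebra.centralizer k {D₁ - D₂}).comap (Algebra.lmul k H)
  have mem_S {a : H} (ha : bracketMulLeft D₁ a = bracketMulLeft D₂ a) : a ∈ S := by
    rw [Subalgebra.mem_comap, Subalgebra.mem_centralizer_iff]
    rintro _ rfl
    rw [Module.End.mul_eq_comp, Module.End.mul_eq_comp, LinearMap.sub_comp, LinearMap.comp_sub,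
      sub_eq_sub_iff_sub_eq_sub]
    exact ha
  have basis_mem (p) : B.basis p ∈ S := by
    obtain ⟨m, I, J⟩ := p
    rw [B.basis_eq]
    refine mul_mem (mul_mem (pow_mem (mem_S hh) m) (list_prod_mem ?_)) (list_prod_mem ?_) <;>
      rw [List.forall_mem_ofFn_iff] <;> intro j
    exacts [pow_mem (mem_S (hx j)) _, pow_mem (mem_S (hy j)) _]
  refine sub_eq_zero.mp (B.basis.ext fun p => ?_)
  have := LinearMap.congr_fun ((Subalgebra.mem_centralizer_iff k).mp (basis_mem p) _ rfl) 1
  simpa [h1] using this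

theorem bracketMulLeft_sum_pdx_comp_pdy_h :
    bracketMulLeft (∑ l, B.pdx l ∘ₗ B.pdy l) B.h = 0 := by
  simp [LinearMap.bracketMulLeft_sum, LinearMap.bracketMulLeft_comp, bracketMulLeft_pdx_h,
    bracketMulLeft_pdy_h]

theorem bracketMulLeft_sum_pdx_comp_pdy_x (j : Fin n) :
    bracketMulLeft (∑ l, B.pdx l ∘ₗ B.pdy l) (B.x j) = B.pdy j := by
  simp only [LinearMap.bracketMulLeft_sum, LinearMap.bracketMulLeft_comp, bracketMulLeft_pdx_x,
    bracketMulLeft_pdy_x, LinearMap.comp_zero, zero_add]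
  rw [Finset.sum_eq_single j (fun l _ hl => by rw [if_neg hl, LinearMap.zero_comp]) (by simp),
    if_pos rfl, LinearMap.id_comp]

theorem bracketMulLeft_sum_pdx_comp_pdy_y (j : Fin n) :
    bracketMulLeft (∑ l, B.pdx l ∘ₗ B.pdy l) (B.y j) = B.pdx j := by
  simp only [LinearMap.bracketMulLeft_sum, LinearMap.bracketMulLeft_comp, bracketMulLeft_pdx_y,
    bracketMulLeft_pdy_y, LinearMap.zero_comp, add_zero]
  rw [Finset.sum_eq_single j (fun l _ hl => by rw [if_neg hl, LinearMap.comp_zero]) (by simp),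
    if_pos rfl, LinearMap.comp_id]

section Swap

variable (b : Module.Basis (ℕ × (Fin n → ℕ) × (Fin n → ℕ)) k H)
  (hb : ∀ m I J, b (m, I, J) =
    B.h ^ m * (List.ofFn fun i => B.y i ^ I i).prod * (List.ofFn fun i => B.x i ^ J i).prod)

noncomputable def swap : HeisenbergPBW k n H where
  h := B.h
  x := B.y
  y i := -B.x i
  basis := b.unitsSMul fun p => (-1) ^ ∑ i, p.2.2 i
  basis_eq m I J := by
    rw [Module.Basis.unitsSMul_apply, hb, List.prod_ofFn_neg_pow, Units.smul_def, Algebra.smul_def]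
    simp only [Units.val_pow_eq_pow_val, Units.val_neg, Units.val_one, map_pow, map_neg, map_one,
      ((Commute.neg_one_left _).pow_left _).left_comm, mul_assoc]
  comm_xy i j := by
    simp only [mul_neg, neg_mul, sub_neg_eq_add, neg_add_eq_sub, B.comm_xy j i, eq_comm]
  comm_xx := B.comm_yy
  comm_yy i j := by rw [neg_mul_neg, neg_mul_neg, B.comm_xx i j]
  h_central := B.h_central

theorem pdh_swap : (B.swap b hb).pdh = B.pdhBar b := by
  refine (B.swap b hb).basis.ext fun ⟨m, I, J⟩ => ?_
  have basis_swap (p) : (B.swap b hb).basis p = ((-1) ^ ∑ i, p.2.2 i : kˣ) • b p :=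
    Module.Basis.unitsSMul_apply p
  rw [pdh_basis, basis_swap, basis_swap, Units.smul_def, Units.smul_def, map_smul, pdhBar,
    Module.Basis.constr_basis, smul_comm]

theorem pdx_swap (l : Fin n) : (B.swap b hb).pdx l = B.pdy l := by
  refine B.ext_of_bracketMulLeft_eq ?_ ?_ (fun j => ?_) (fun j => ?_)
  · rw [pdx_one, pdy_one]
  · rw [bracketMulLeft_pdy_h]
    exact (B.swap b hb).bracketMulLeft_pdx_h l
  · have := (B.swap b hb).bracketMulLeft_pdx_y l j
    rw [show (B.swap b hb).y j = -B.x j from rfl, LinearMap.bracketMulLeft_neg_right,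
      neg_eq_zero] at this
    rw [this, bracketMulLeft_pdy_x]
  · exact ((B.swap b hb).bracketMulLeft_pdx_x l j).trans (B.bracketMulLeft_pdy_y l j).symm

include hb in
theorem pdhBar_one : B.pdhBar b 1 = 0 :=
  B.pdh_swap b hb ▸ (B.swap b hb).pdh_one

include hb in
theorem bracketMulLeft_pdhBar_h : bracketMulLeft (B.pdhBar b) B.h = LinearMap.id :=
  B.pdh_swap b hb ▸ (B.swap b hb).bracketMulLeft_pdh_h

include hb in
theorem bracketMulLeft_pdhBar_x (l : Fin n) : bracketMulLeft (B.pdhBar b) (B.x l) = B.pdy l := by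
  have := (B.swap b hb).bracketMulLeft_pdh_y l
  rwa [pdh_swap, pdx_swap, show (B.swap b hb).y l = -B.x l from rfl,
    LinearMap.bracketMulLeft_neg_right, neg_inj] at this

include hb in
theorem bracketMulLeft_pdhBar_y (l : Fin n) : bracketMulLeft (B.pdhBar b) (B.y l) = 0 :=
  B.pdh_swap b hb ▸ (B.swap b hb).bracketMulLeft_pdh_x l

end Swap

end HeisenbergPBW

theorem HeisenbergPBW.pdhBar_relations_general {k : Type*} [Field k] {n : ℕ}
    {H : Type*} [Ring H] [Algebra k H] (B : HeisenbergPBW k n H)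
    (basis' : Module.Basis (ℕ × (Fin n → ℕ) × (Fin n → ℕ)) k H)
    (basis'_eq : ∀ (m : ℕ) (I J : Fin n → ℕ), basis' (m, I, J) =
      B.h ^ m * (List.ofFn fun i => B.y i ^ I i).prod *
        (List.ofFn fun i => B.x i ^ J i).prod) :
    B.pdhBar basis' = B.pdh + ∑ l, (B.pdx l).comp (B.pdy l) ∧
    (∀ l, (B.pdhBar basis').comp (LinearMap.mulLeft k (B.x l)) -
      (LinearMap.mulLeft k (B.x l)).comp (B.pdhBar basis') = B.pdy l) ∧
    (∀ l, (B.pdhBar basis').comp (LinearMap.mulLeft k (B.y l)) -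
      (LinearMap.mulLeft k (B.y l)).comp (B.pdhBar basis') = 0) ∧
    (B.pdhBar basis').comp (LinearMap.mulLeft k B.h) -
      (LinearMap.mulLeft k B.h).comp (B.pdhBar basis') = LinearMap.id := by
  refine ⟨B.ext_of_bracketMulLeft_eq ?_ ?_ (fun j => ?_) (fun j => ?_),
    B.bracketMulLeft_pdhBar_x basis' basis'_eq, B.bracketMulLeft_pdhBar_y basis' basis'_eq,
    B.bracketMulLeft_pdhBar_h basis' basis'_eq⟩
  · simp [B.pdhBar_one basis' basis'_eq, pdh_one, pdy_one]
  · rw [LinearMap.bracketMulLeft_add, B.bracketMulLeft_pdhBar_h basis' basis'_eq,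
      bracketMulLeft_pdh_h, bracketMulLeft_sum_pdx_comp_pdy_h, add_zero]
  · rw [LinearMap.bracketMulLeft_add, B.bracketMulLeft_pdhBar_x basis' basis'_eq,
      bracketMulLeft_pdh_x, bracketMulLeft_sum_pdx_comp_pdy_x, zero_add]
  · rw [LinearMap.bracketMulLeft_add, B.bracketMulLeft_pdhBar_y basis' basis'_eq,
      bracketMulLeft_pdh_y, bracketMulLeft_sum_pdx_comp_pdy_y, neg_add_cancel]

/-- On `H_n` over a field of characteristic `0`, the operator `∂̄_h` (derivative with
respect to `h` in the basis `h^m y^I x^J`) satisfies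
`∂̄_h = ∂_h + Σ_l ∂_{x_l} ∂_{y_l}`, and `[∂̄_h, λ_{x_l}] = ∂_{y_l}`,
`[∂̄_h, λ_{y_l}] = 0`, `[∂̄_h, λ_h] = id`. -/
theorem HeisenbergPBW.pdhBar_relations {k : Type*} [Field k] [CharZero k] {n : ℕ}
    {H : Type*} [Ring H] [Algebra k H] (B : HeisenbergPBW k n H)
    (basis' : Module.Basis (ℕ × (Fin n → ℕ) × (Fin n → ℕ)) k H)
    (basis'_eq : ∀ (m : ℕ) (I J : Fin n → ℕ), basis' (m, I, J) =
      B.h ^ m * (List.ofFn fun i => B.y i ^ I i).prod *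
        (List.ofFn fun i => B.x i ^ J i).prod) :
    B.pdhBar basis' = B.pdh + ∑ l, (B.pdx l).comp (B.pdy l) ∧
    (∀ l, (B.pdhBar basis').comp (LinearMap.mulLeft k (B.x l)) -
      (LinearMap.mulLeft k (B.x l)).comp (B.pdhBar basis') = B.pdy l) ∧
    (∀ l, (B.pdhBar basis').comp (LinearMap.mulLeft k (B.y l)) -
      (LinearMap.mulLeft k (B.y l)).comp (B.pdhBar basis') = 0) ∧
    (B.pdhBar basis').comp (LinearMap.mulLeft k B.h) -
      (LinearMap.mulLeft k B.h).comp (B.pdhBar basis') = LinearMap.id :=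
  HeisenbergPBW.pdhBar_relations_general B basis' basis'_eq
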